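/- arXiv:1406.5403 — 3 statements merged into one kernel-verified Lean document; each statement's English description precedes it below -/
import Mathlib

section
/- Let $\{\tau_k\}_{k\ge 0} \subseteq (0,1)$ and $\{\psi_k\}_{k\ge 0}$ be real sequences, and let $\{G_k\}_{k\ge 0}$ be a sequence of reals satisfying $G_{k+1} \le (1-\tau_k) G_k - \psi_k$ for all $k$. If $\lim_{k\to\infty}\tau_k = 0$, $\sum_{k=0}^\infty \tau_k = +\infty$, and $\sum_{k=0}^\infty |\psi_k| < +\infty$, then $\limsup_{k\to\infty} G_k \le 0$. -/
/-!
Unrolling the recursion from an index `m`, with `|ψ k|` in place of `-ψ k`, gives for `n ≥ m`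
`G n ≤ (∏_{m ≤ k < n} (1 - τ k)) * max (G m) 0 + ∑_{k ≥ m} |ψ k|`.
Since `1 - t ≤ exp (-t)`, the product is at most `exp (-∑_{m ≤ k < n} τ k)`, which tends to `0`
because `∑ τ k` diverges; and the tail of the summable series `∑ |ψ k|` is small once `m` is large.
Hence `G n ≤ ε` eventually, for every `ε > 0`.
-/

open Filter Finset Topology

theorem prod_one_sub_le_exp_neg_sum {ι : Type*} (s : Finset ι) {τ : ι → ℝ}
    (hτ : ∀ i ∈ s, τ i ≤ 1) :
    ∏ i ∈ s, (1 - τ i) ≤ Real.exp (-∑ i ∈ s, τ i) := by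
  rw [← sum_neg_distrib, Real.exp_sum]
  exact prod_le_prod (fun i hi => sub_nonneg.2 (hτ i hi)) fun i _ => Real.one_sub_le_exp_neg _

theorem tendsto_prod_Ico_one_sub_of_tendsto_sum {τ : ℕ → ℝ} (hτ : ∀ k, τ k ≤ 1)
    (hτsum : Tendsto (fun n => ∑ k ∈ range n, τ k) atTop atTop) (m : ℕ) :
    Tendsto (fun n => ∏ k ∈ Ico m n, (1 - τ k)) atTop (𝓝 0) := by
  have hsum : Tendsto (fun n => ∑ k ∈ Ico m n, τ k) atTop atTop := by
    refine (tendsto_atTop_add_const_right _ (-∑ k ∈ range m, τ k) hτsum).congr' ?_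
    filter_upwards [eventually_ge_atTop m] with n hmn
    rw [sum_Ico_eq_sub _ hmn, sub_eq_add_neg]
  have hexp : Tendsto (fun n => Real.exp (-∑ k ∈ Ico m n, τ k)) atTop (𝓝 0) :=
    Real.tendsto_exp_atBot.comp (tendsto_neg_atTop_atBot.comp hsum)
  exact tendsto_of_tendsto_of_tendsto_of_le_of_le tendsto_const_nhds hexp
    (fun n => prod_nonneg fun k _ => sub_nonneg.2 (hτ k))
    (fun n => prod_one_sub_le_exp_neg_sum _ fun k _ => hτ k)

theorem sum_Ico_le_tsum_nat_add {b : ℕ → ℝ} (hb : ∀ k, 0 ≤ b k) (hbs : Summable b) (m n : ℕ) :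
    ∑ k ∈ Ico m n, b k ≤ ∑' k, b (k + m) := by
  rw [sum_Ico_eq_sum_range]
  simp_rw [add_comm m]
  exact ((summable_nat_add_iff m).2 hbs).sum_le_tsum _ fun k _ => hb _

theorem Real.limsup_nonpos_of_forall_eventually_le {ι : Type*} {f : Filter ι} {u : ι → ℝ}
    (h : ∀ ε > 0, ∀ᶠ i in f, u i ≤ ε) :
    limsup u f ≤ 0 := by
  by_cases hu : f.IsCoboundedUnder (· ≤ ·) u
  · exact le_of_forall_pos_le_add fun ε hε => by simpa using limsup_le_of_le hu (h ε hε)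
  · rw [Real.limsup_of_not_isCoboundedUnder hu]

section Recursion

variable {x τ b : ℕ → ℝ} (hτ₀ : ∀ k, 0 ≤ τ k) (hτ₁ : ∀ k, τ k ≤ 1) (hb : ∀ k, 0 ≤ b k)
  (hx : ∀ k, x (k + 1) ≤ (1 - τ k) * x k + b k)
include hτ₀ hτ₁ hb hx

theorem le_prod_mul_add_sum_of_le_one_sub_mul_add {m n : ℕ} (hmn : m ≤ n) :
    x n ≤ (∏ k ∈ Ico m n, (1 - τ k)) * x m + ∑ k ∈ Ico m n, b k := by
  induction n, hmn using Nat.le_induction with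
  | base => simp
  | succ n hmn ih =>
    have hS : 0 ≤ ∑ k ∈ Ico m n, b k := sum_nonneg fun k _ => hb k
    rw [prod_Ico_succ_top hmn, sum_Ico_succ_top hmn]
    calc x (n + 1) ≤ (1 - τ n) * x n + b n := hx n
      _ ≤ (1 - τ n) * ((∏ k ∈ Ico m n, (1 - τ k)) * x m + ∑ k ∈ Ico m n, b k) + b n := by
        gcongr
        linarith [hτ₁ n]
      _ ≤ _ := by nlinarith [mul_nonneg (hτ₀ n) hS]

theorem eventually_le_of_le_one_sub_mul_add
    (hτsum : Tendsto (fun n => ∑ k ∈ range n, τ k) atTop atTop) (hbs : Summable b)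
    {ε : ℝ} (hε : 0 < ε) :
    ∀ᶠ n in atTop, x n ≤ ε := by
  obtain ⟨m, hm⟩ := ((tendsto_sum_nat_add b).eventually (gt_mem_nhds (half_pos hε))).exists
  have hprod := (tendsto_prod_Ico_one_sub_of_tendsto_sum hτ₁ hτsum m).mul_const (max (x m) 0)
  rw [zero_mul] at hprod
  filter_upwards [hprod.eventually (gt_mem_nhds (half_pos hε)), eventually_ge_atTop m]
    with n hn hmn
  calc x n ≤ (∏ k ∈ Ico m n, (1 - τ k)) * x m + ∑ k ∈ Ico m n, b k :=
        le_prod_mul_add_sum_of_le_one_sub_mul_add hτ₀ hτ₁ hb hx hmn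
    _ ≤ (∏ k ∈ Ico m n, (1 - τ k)) * max (x m) 0 + ∑' k, b (k + m) := by
        gcongr
        · exact prod_nonneg fun k _ => sub_nonneg.2 (hτ₁ k)
        · exact le_max_left _ _
        · exact sum_Ico_le_tsum_nat_add hb hbs m n
    _ ≤ ε := by linarith

end Recursion

theorem gap_recursion_limsup_nonpos_general (τ ψ G : ℕ → ℝ)
    (hτ : ∀ k, τ k ∈ Set.Ioo (0:ℝ) 1)
    (hG : ∀ k, G (k+1) ≤ (1 - τ k) * G k - ψ k)
    (hτsum : Tendsto (fun n => ∑ k ∈ Finset.range n, τ k) atTop atTop)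
    (hψ : Summable fun k => |ψ k|) :
    limsup G atTop ≤ 0 := by
  have hG' : ∀ k, G (k + 1) ≤ (1 - τ k) * G k + |ψ k| := fun k => by
    linarith [hG k, neg_abs_le (ψ k)]
  exact Real.limsup_nonpos_of_forall_eventually_le fun ε hε =>
    eventually_le_of_le_one_sub_mul_add (fun k => (hτ k).1.le) (fun k => (hτ k).2.le)
      (fun k => abs_nonneg _) hG' hτsum hψ hε

theorem gap_recursion_limsup_nonpos (τ ψ G : ℕ → ℝ)
    (hτ : ∀ k, τ k ∈ Set.Ioo (0:ℝ) 1)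
    (hG : ∀ k, G (k+1) ≤ (1 - τ k) * G k - ψ k)
    (hτ0 : Tendsto τ atTop (nhds 0))
    (hτsum : Tendsto (fun n => ∑ k ∈ Finset.range n, τ k) atTop atTop)
    (hψ : Summable fun k => |ψ k|) :
    limsup G atTop ≤ 0 :=
  gap_recursion_limsup_nonpos_general τ ψ G hτ hG hτsum hψ
end

section
/- Let $c \in (-1,1]$ and define $a_0 := \tfrac{1}{2}\big(1 + c + \sqrt{4(1-c) + (1+c)^2}\big)$. Suppose $\{c_k\}_{k\ge 1} \subseteq (-1,1]$ with $c_1 = c$ in the recursion $a_{k+1} := \tfrac{1}{2}\big(1 + c_{k+1} + \sqrt{4a_k^2 + (1-c_{k+1})^2}\big)$. Then for all $k \ge 0$, $a_k + \tfrac{c_{k+1}+1}{2} \le a_{k+1} \le a_k + 1$, and consequently $\tfrac{1}{2}\big(k + a_0 + s_k\big) \le a_k \le k + a_0$, where $s_k := \sum_{i=1}^k c_i$. -/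
/-!
Each step adds to `aₖ` half of `1 + c + √(4aₖ² + (1-c)²) - 2aₖ`, and
`2aₖ ≤ √(4aₖ² + (1-c)²) ≤ 2aₖ + (1-c)` as long as `aₖ ≥ 0`; summing the per-step bounds gives
the bounds on `aₖ`. Nonnegativity is automatic because `a₀` is itself one step of the recursion,
started from `a₋₁ = 1`.
-/

open Finset

section Telescoping

variable {α : Type*} [AddCommMonoid α] [PartialOrder α] [IsOrderedAddMonoid α] {a d : ℕ → α}

theorem add_sum_Icc_le_of_forall_add_le (h : ∀ k, a k + d (k + 1) ≤ a (k + 1)) (k : ℕ) :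
    a 0 + ∑ i ∈ Icc 1 k, d i ≤ a k := by
  induction k with
  | zero => simp
  | succ k ih =>
    calc a 0 + ∑ i ∈ Icc 1 (k + 1), d i = (a 0 + ∑ i ∈ Icc 1 k, d i) + d (k + 1) := by
          rw [sum_Icc_succ_top (by omega), add_assoc]
      _ ≤ a k + d (k + 1) := by gcongr
      _ ≤ a (k + 1) := h k

theorem le_add_sum_Icc_of_forall_le_add (h : ∀ k, a (k + 1) ≤ a k + d (k + 1)) (k : ℕ) :
    a k ≤ a 0 + ∑ i ∈ Icc 1 k, d i := by
  induction k with
  | zero => simp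
  | succ k ih =>
    calc a (k + 1) ≤ a k + d (k + 1) := h k
      _ ≤ (a 0 + ∑ i ∈ Icc 1 k, d i) + d (k + 1) := by gcongr
      _ = a 0 + ∑ i ∈ Icc 1 (k + 1), d i := by
          rw [sum_Icc_succ_top (by omega), add_assoc]

end Telescoping

section Stepsize

noncomputable def stepsizeNext (a c : ℝ) : ℝ :=
  (1 + c + √(4 * a ^ 2 + (1 - c) ^ 2)) / 2

variable {a c : ℝ}

theorem stepsizeNext_nonneg (hc : -1 ≤ c) : 0 ≤ stepsizeNext a c := by
  unfold stepsizeNext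
  linarith [Real.sqrt_nonneg (4 * a ^ 2 + (1 - c) ^ 2)]

theorem add_le_stepsizeNext : a + (c + 1) / 2 ≤ stepsizeNext a c := by
  have h : 2 * a ≤ √(4 * a ^ 2 + (1 - c) ^ 2) :=
    (le_abs_self _).trans (Real.abs_le_sqrt (by nlinarith [sq_nonneg (1 - c)]))
  unfold stepsizeNext
  linarith

theorem stepsizeNext_le_add_one (ha : 0 ≤ a) (hc : c ≤ 1) : stepsizeNext a c ≤ a + 1 := by
  have h : √(4 * a ^ 2 + (1 - c) ^ 2) ≤ 2 * a + (1 - c) :=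
    Real.sqrt_le_iff.mpr ⟨by linarith, by nlinarith [mul_nonneg ha (sub_nonneg.mpr hc)]⟩
  unfold stepsizeNext
  linarith

end Stepsize

/-- Bounds on the step-size recursion `a_{k+1} = (1 + c_{k+1} + √(4 a_k² + (1-c_{k+1})²))/2`
with `a₀ = (1 + c₀ + √(4(1-c₀) + (1+c₀)²))/2` and `c_k ∈ (-1, 1]`. -/
theorem stepsize_recursion_bounds (c a : ℕ → ℝ)
    (hc : ∀ k, c k ∈ Set.Ioc (-1:ℝ) 1)
    (ha0 : a 0 = (1 + c 0 + Real.sqrt (4 * (1 - c 0) + (1 + c 0)^2)) / 2)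
    (harec : ∀ k, a (k+1) = (1 + c (k+1) + Real.sqrt (4 * (a k)^2 + (1 - c (k+1))^2)) / 2) :
    (∀ k, a k + (c (k+1) + 1) / 2 ≤ a (k+1) ∧ a (k+1) ≤ a k + 1) ∧
    (∀ k : ℕ, ((k : ℝ) + a 0 + ∑ i ∈ Finset.Icc 1 k, c i) / 2 ≤ a k ∧
      a k ≤ (k : ℝ) + a 0) := by
  have hnext : ∀ k, a (k + 1) = stepsizeNext (a k) (c (k + 1)) := harec
  have hnonneg : ∀ k, 0 ≤ a k
    | 0 => by
      rw [ha0, show 4 * (1 - c 0) + (1 + c 0) ^ 2 = 4 * 1 ^ 2 + (1 - c 0) ^ 2 by ring]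
      exact stepsizeNext_nonneg (hc 0).1.le
    | k + 1 => hnext k ▸ stepsizeNext_nonneg (hc (k + 1)).1.le
  have hstep : ∀ k, a k + (c (k + 1) + 1) / 2 ≤ a (k + 1) ∧ a (k + 1) ≤ a k + 1 := fun k =>
    hnext k ▸ ⟨add_le_stepsizeNext, stepsizeNext_le_add_one (hnonneg k) (hc (k + 1)).2⟩
  refine ⟨hstep, fun k => ⟨?_, ?_⟩⟩
  · have hlower := add_sum_Icc_le_of_forall_add_le (d := fun i => (c i + 1) / 2)
      (fun k => (hstep k).1) k
    have hsum : ∑ i ∈ Icc 1 k, (c i + 1) / 2 = (∑ i ∈ Icc 1 k, c i + k) / 2 := by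
      rw [← sum_div, sum_add_distrib]
      simp
    linarith [hnonneg 0]
  · simpa [add_comm] using le_add_sum_Icc_of_forall_le_add (d := fun _ => (1 : ℝ))
      (fun k => (hstep k).2) k
end

section
/- Let $f : \mathbb{R}^n \to \mathbb{R}\cup\{+\infty\}$ be proper closed and $\sigma_f$-strongly convex with $\sigma_f > 0$, $\mathcal{X}$ nonempty closed convex, and let $(\mathbf{x}^\star, \mathbf{y}^\star)$ satisfy the optimality conditions: $\mathbf{A}\mathbf{x}^\star = \mathbf{b}$ and there exists $\xi \in \partial f(\mathbf{x}^\star)$ with $(\xi + \mathbf{A}^T\mathbf{y}^\star)^T(\mathbf{x} - \mathbf{x}^\star) \ge 0$ for all $\mathbf{x} \in \mathcal{X}$. Then for any $\mathbf{x} \in \mathcal{X}$: $\|\mathbf{x} - \mathbf{x}^\star\|_2^2 \le \frac{2}{\sigma_f}\big[f(\mathbf{x}) - f(\mathbf{x}^\star)\big] + \frac{2\|\mathbf{y}^\star\|_2}{\sigma_f}\|\mathbf{A}\mathbf{x} - \mathbf{b}\|_2$. -/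
open scoped RealInnerProductSpace

/-- Error bound for strongly convex constrained problems: if `(x⋆, y⋆)` satisfies the
optimality conditions, then for all `x ∈ X`,
`‖x - x⋆‖² ≤ (2/σ)(f(x) - f(x⋆)) + (2‖y⋆‖/σ)‖Ax - b‖`. -/
theorem strongly_convex_error_bound (n m : ℕ)
    (f : EuclideanSpace ℝ (Fin n) → ℝ) (σ : ℝ) (hσ : 0 < σ)
    (X : Set (EuclideanSpace ℝ (Fin n)))
    (hX : X.Nonempty) (hXcl : IsClosed X) (hXconv : Convex ℝ X)
    (hsc : StrongConvexOn X σ f)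
    (A : EuclideanSpace ℝ (Fin n) →L[ℝ] EuclideanSpace ℝ (Fin m))
    (b ys : EuclideanSpace ℝ (Fin m)) (xs : EuclideanSpace ℝ (Fin n))
    (hxsX : xs ∈ X) (hfeas : A xs = b)
    (ξ : EuclideanSpace ℝ (Fin n))
    (hξ : ∀ z, f xs + ⟪ξ, z - xs⟫ ≤ f z)
    (hvi : ∀ x ∈ X, 0 ≤ ⟪ξ + ContinuousLinearMap.adjoint A ys, x - xs⟫) :
    ∀ x ∈ X, ‖x - xs‖^2 ≤ 2/σ * (f x - f xs) + 2*‖ys‖/σ * ‖A x - b‖ := by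
  intro x hx
  -- Step 1: strengthened subgradient inequality from strong convexity
  have key : ⟪ξ, x - xs⟫ + σ/2 * ‖x - xs‖^2 ≤ f x - f xs := by
    have h1 : ∀ t : ℝ, t ∈ Set.Ioo (0:ℝ) 1 →
        ⟪ξ, x - xs⟫ + (1 - t) * (σ/2 * ‖x - xs‖^2) ≤ f x - f xs := by
      intro t ht
      have h2 := hsc.2 hx hxsX ht.1.le (by linarith [ht.2] : (0:ℝ) ≤ 1 - t) (by ring)
      have h3 := hξ (t • x + (1 - t) • xs)
      have hz : (t • x + (1 - t) • xs) - xs = t • (x - xs) := by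
        module
      rw [hz, real_inner_smul_right] at h3
      simp only [smul_eq_mul] at h2
      have ht0 := ht.1
      nlinarith [h2, h3]
    have hcont : Filter.Tendsto
        (fun t : ℝ => ⟪ξ, x - xs⟫ + (1 - t) * (σ/2 * ‖x - xs‖^2))
        (nhdsWithin 0 (Set.Ioi 0))
        (nhds (⟪ξ, x - xs⟫ + (1 - 0) * (σ/2 * ‖x - xs‖^2))) := by
      apply Filter.Tendsto.mono_left _ nhdsWithin_le_nhds
      exact Continuous.tendsto (by continuity) 0
    have hle := le_of_tendsto hcont (by
      filter_upwards [Ioo_mem_nhdsGT_of_mem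
        (by norm_num : (0:ℝ) ∈ Set.Ico (0:ℝ) 1)] with t ht
      exact h1 t ht)
    simpa using hle
  -- Step 2: variational inequality gives a lower bound on ⟪ξ, x - xs⟫
  have hvi' := hvi x hx
  rw [inner_add_left, ContinuousLinearMap.adjoint_inner_left] at hvi'
  have hAx : A (x - xs) = A x - b := by rw [map_sub, hfeas]
  rw [hAx] at hvi'
  have hcs : ⟪ys, A x - b⟫ ≤ ‖ys‖ * ‖A x - b‖ := real_inner_le_norm _ _
  -- Step 3: combine
  have h4 : σ * ‖x - xs‖^2 ≤ 2*(f x - f xs) + 2*‖ys‖*‖A x - b‖ := by nlinarith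
  have h5 : ‖x - xs‖^2 ≤ (2*(f x - f xs) + 2*‖ys‖*‖A x - b‖) / σ :=
    (le_div_iff₀ hσ).2 (by linarith [mul_comm σ (‖x - xs‖^2)])
  have heq : 2/σ * (f x - f xs) + 2*‖ys‖/σ * ‖A x - b‖
      = (2*(f x - f xs) + 2*‖ys‖*‖A x - b‖) / σ := by
    by_cases h : σ = 0 <;> field_simp <;> ring
  linarith [h5, heq.ge]
end
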